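/- Let M ≥ N ≥ 1, α > 0, τ(k) = 1 + kα(M−N+k). For integers 2 ≤ k ≤ N and 1 ≤ k' ≤ k−1: (N−k')τ(k) − (k−k')α − (N−k+1)τ(k−1) ≥ ((N−k+1)(M−N+2k−1) − 1)·α > 0. -/
import Mathlib


/-- With τ(k) = 1 + kα(M−N+k), for 2 ≤ k ≤ N and 1 ≤ k' ≤ k−1:
(N−k')τ(k) − (k−k')α − (N−k+1)τ(k−1) ≥ ((N−k+1)(M−N+2k−1) − 1)·α > 0. -/
theorem corner_beyond_boundary {M N k k' : ℕ} (hN : 1 ≤ N) (hMN : N ≤ M)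
    (hk2 : 2 ≤ k) (hkN : k ≤ N) (hk1 : 1 ≤ k') (hk'k : k' ≤ k - 1)
    (α : ℝ) (hα : 0 < α) :
    (((N : ℝ) - k') * (1 + k * α * ((M : ℝ) - N + k)) - ((k : ℝ) - k') * α
        - ((N : ℝ) - k + 1) * (1 + ((k : ℝ) - 1) * α * ((M : ℝ) - N + k - 1))
      ≥ (((N : ℝ) - k + 1) * ((M : ℝ) - N + 2 * k - 1) - 1) * α)
    ∧ 0 < (((N : ℝ) - k + 1) * ((M : ℝ) - N + 2 * k - 1) - 1) * α := by
  have hk2' : (2 : ℝ) ≤ (k : ℝ) := by exact_mod_cast hk2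
  have hkN' : (k : ℝ) ≤ N := by exact_mod_cast hkN
  have hMN' : (N : ℝ) ≤ M := by exact_mod_cast hMN
  have hk1' : (1 : ℝ) ≤ (k' : ℝ) := by exact_mod_cast hk1
  have hk'k' : (k' : ℝ) ≤ (k : ℝ) - 1 := by
    have : (k' : ℝ) ≤ ((k - 1 : ℕ) : ℝ) := by exact_mod_cast hk'k
    rwa [Nat.cast_sub (by omega), Nat.cast_one] at this
  constructor
  · nlinarith [mul_nonneg (sub_nonneg.2 hk'k') hα.le,
      mul_nonneg (mul_nonneg (sub_nonneg.2 hk'k') hα.le) (by nlinarith : (0:ℝ) ≤ (k:ℝ)*((M:ℝ)-N+k) - 1)]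
  · have h1 : (1:ℝ) ≤ (N:ℝ)-k+1 := by linarith
    have h2 : (3:ℝ) ≤ (M:ℝ)-N+2*k-1 := by linarith
    nlinarith [mul_le_mul h1 h2 (by linarith) (by linarith : (0:ℝ) ≤ (N:ℝ)-k+1)]
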